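/- Let x_1 < x_2 < … < x_{n+1} < t_{l+1} < t_l < … < t_2 < t_1 be real numbers with l ≥ n. Then the (l+1)×(n+1) Lagrange-Vandermonde matrix A with entries A_{ij} = ∏_{k=1, k≠j}^{n+1} (t_i − x_k) is strictly totally positive, i.e., every minor of A (the determinant of every square submatrix obtained by choosing rows and columns with strictly increasing indices) is strictly positive. -/
import Mathlib


open Matrix Finset
section LVSTP_aux
open Polynomial
/-- factorization of the square Lagrange-Vandermonde-type matrix as
Vandermonde times a coefficient matrix. -/
lemma LV_factor {m : ℕ} (a b : Fin m → ℝ) :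
    (Matrix.of fun i j : Fin m => ∏ k ∈ Finset.univ.erase j, (a i - b k)) =
      Matrix.vandermonde a *
        Matrix.of (fun d j : Fin m =>
          (∏ k ∈ Finset.univ.erase j, (X - C (b k))).coeff d) := by
  funext i j
  rw [Matrix.mul_apply]
  have hdeg : (∏ k ∈ Finset.univ.erase j, (X - C (b k))).natDegree < m := by
    have h1 : (∏ k ∈ Finset.univ.erase j, (X - C (b k))).natDegree
        ≤ ∑ k ∈ Finset.univ.erase j, (X - C (b k)).natDegree :=
      Polynomial.natDegree_prod_le _ _
    have h2 : ∑ k ∈ Finset.univ.erase j, (X - C (b k)).natDegree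
        ≤ (Finset.univ.erase j).card := by
      apply le_trans (Finset.sum_le_card_nsmul _ _ 1 ?_)
      · simp
      · intro k _; exact Polynomial.natDegree_X_sub_C_le _
    have hm : 0 < m := j.pos
    have h3 : (Finset.univ.erase j).card < m := by
      rw [Finset.card_erase_of_mem (Finset.mem_univ j), Finset.card_univ,
        Fintype.card_fin]
      omega
    omega
  have := Polynomial.eval_eq_sum_range' hdeg (a i)
  simp only [Polynomial.eval_prod, Polynomial.eval_sub, Polynomial.eval_X,
    Polynomial.eval_C] at this
  rw [Matrix.of_apply, this, ← Fin.sum_univ_eq_sum_range]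
  simp [Matrix.vandermonde, mul_comm]

/-- the Lagrange-Vandermonde matrix at `a = b` is diagonal. -/
lemma LV_diag {m : ℕ} (b : Fin m → ℝ) :
    (Matrix.of fun i j : Fin m => ∏ k ∈ Finset.univ.erase j, (b i - b k)) =
      Matrix.diagonal (fun i => ∏ k ∈ Finset.univ.erase i, (b i - b k)) := by
  funext i j
  by_cases h : i = j
  · subst h; simp [Matrix.diagonal]
  · rw [Matrix.diagonal_apply_ne _ h, Matrix.of_apply]
    apply Finset.prod_eq_zero (Finset.mem_erase.mpr ⟨h, Finset.mem_univ i⟩)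
    ring

lemma prod_exchange {m : ℕ} (F : Fin m → Fin m → ℝ) :
    ∏ i : Fin m, ∏ j ∈ Finset.Iio i, F i j =
      ∏ i : Fin m, ∏ j ∈ Finset.Ioi i, F j i := by
  rw [Finset.prod_sigma', Finset.prod_sigma']
  refine Finset.prod_nbij' (fun p => ⟨p.2, p.1⟩) (fun p => ⟨p.2, p.1⟩)
    ?_ ?_ ?_ ?_ ?_ <;> simp

lemma prod_erase_split {m : ℕ} (F : Fin m → Fin m → ℝ) :
    ∏ i : Fin m, ∏ k ∈ Finset.univ.erase i, F i k =
      (∏ i : Fin m, ∏ j ∈ Finset.Ioi i, F j i) *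
        (∏ i : Fin m, ∏ j ∈ Finset.Ioi i, F i j) := by
  have hsplit : ∀ i : Fin m, Finset.univ.erase i = Finset.Iio i ∪ Finset.Ioi i := by
    intro i; ext k
    simp only [Finset.mem_erase, Finset.mem_univ, and_true, Finset.mem_union,
      Finset.mem_Iio, Finset.mem_Ioi]
    exact ⟨fun h => h.lt_or_gt, fun h => h.elim ne_of_lt ne_of_gt⟩
  have hdisj : ∀ i : Fin m, Disjoint (Finset.Iio i) (Finset.Ioi i) := by
    intro i
    rw [Finset.disjoint_left]
    intro k hk hk'
    exact absurd (Finset.mem_Ioi.mp hk') (not_lt_of_gt (Finset.mem_Iio.mp hk))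
  calc ∏ i : Fin m, ∏ k ∈ Finset.univ.erase i, F i k
      = ∏ i : Fin m, ((∏ k ∈ Finset.Iio i, F i k) * ∏ k ∈ Finset.Ioi i, F i k) := by
        apply Finset.prod_congr rfl
        intro i _
        rw [hsplit i, Finset.prod_union (hdisj i)]
    _ = (∏ i : Fin m, ∏ k ∈ Finset.Iio i, F i k) *
          ∏ i : Fin m, ∏ k ∈ Finset.Ioi i, F i k := Finset.prod_mul_distrib
    _ = (∏ i : Fin m, ∏ j ∈ Finset.Ioi i, F j i) *
          ∏ i : Fin m, ∏ j ∈ Finset.Ioi i, F i j := by rw [prod_exchange]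

lemma cauchy_like_det {m : ℕ} (a b : Fin m → ℝ) (hb : StrictMono b) :
    (Matrix.of fun i j : Fin m =>
        ∏ k ∈ Finset.univ.erase j, (a i - b k)).det =
      ∏ i : Fin m, ∏ j ∈ Finset.Ioi i, (a j - a i) * (b i - b j) := by
  have hVb : (Matrix.vandermonde b).det = ∏ i : Fin m, ∏ j ∈ Finset.Ioi i, (b j - b i) :=
    Matrix.det_vandermonde b
  have hVbne : (Matrix.vandermonde b).det ≠ 0 := by
    rw [hVb]
    apply ne_of_gt
    apply Finset.prod_pos; intro i _; apply Finset.prod_pos; intro j hj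
    exact sub_pos.mpr (hb (Finset.mem_Ioi.mp hj))
  set T := Matrix.of (fun d j : Fin m =>
      (∏ k ∈ Finset.univ.erase j, (X - C (b k))).coeff d) with hT
  rw [hVb] at hVbne
  have hTdet : T.det = ∏ i : Fin m, ∏ j ∈ Finset.Ioi i, (b i - b j) := by
    have h1 := congrArg Matrix.det (LV_factor b b)
    rw [Matrix.det_mul, LV_diag, Matrix.det_diagonal, hVb, ← hT] at h1
    rw [prod_erase_split (fun i k => b i - b k)] at h1
    exact (mul_left_cancel₀ hVbne h1.symm)
  have h2 := congrArg Matrix.det (LV_factor a b)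
  rw [Matrix.det_mul, Matrix.det_vandermonde, hTdet] at h2
  rw [h2, ← Finset.prod_mul_distrib]
  apply Finset.prod_congr rfl
  intro i _
  rw [← Finset.prod_mul_distrib]

end LVSTP_aux

/-- If `x₁ < … < x_{n+1} < t_{l+1} < … < t₁` with `l ≥ n`, then the
`(l+1) × (n+1)` Lagrange-Vandermonde matrix `A`, with entries
`A i j = ∏_{k ≠ j} (t i - x k)`, is strictly totally positive: every minor
(with strictly increasing choices of rows and columns) is strictly positive. -/
theorem lagrange_vandermonde_STP (n l : ℕ) (hln : n ≤ l)
    (x : Fin (n + 1) → ℝ) (t : Fin (l + 1) → ℝ)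
    (hx : StrictMono x) (ht : StrictAnti t)
    (hxt : x (Fin.last n) < t (Fin.last l)) :
    ∀ (m : ℕ) (f : Fin m → Fin (l + 1)) (g : Fin m → Fin (n + 1)),
      StrictMono f → StrictMono g →
      0 < (((Matrix.of fun (i : Fin (l + 1)) (j : Fin (n + 1)) =>
            ∏ k ∈ Finset.univ.erase j, (t i - x k)) :
          Matrix (Fin (l + 1)) (Fin (n + 1)) ℝ).submatrix f g).det := by

  intro m f g hf hg
  have hxall : ∀ (i : Fin (l + 1)) (k : Fin (n + 1)), x k < t i := by
    intro i k
    calc x k ≤ x (Fin.last n) := hx.monotone (Fin.le_last k)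
      _ < t (Fin.last l) := hxt
      _ ≤ t i := ht.antitone (Fin.le_last i)
  set a : Fin m → ℝ := fun i => t (f i) with ha_def
  set b : Fin m → ℝ := fun j => x (g j) with hb_def
  have hb : StrictMono b := fun i j hij => hx (hg hij)
  have hginj : Function.Injective g := hg.injective
  set R : Fin m → ℝ := fun i =>
    ∏ k ∈ Finset.univ \ Finset.image g Finset.univ, (t (f i) - x k) with hR_def
  have hMeq : (((Matrix.of fun (i : Fin (l + 1)) (j : Fin (n + 1)) =>
            ∏ k ∈ Finset.univ.erase j, (t i - x k)) :
          Matrix (Fin (l + 1)) (Fin (n + 1)) ℝ).submatrix f g) =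
      Matrix.of (fun i j : Fin m => R i *
        (Matrix.of fun i j : Fin m => ∏ k ∈ Finset.univ.erase j, (a i - b k)) i j) := by
    funext i j
    simp only [Matrix.submatrix_apply, Matrix.of_apply, hR_def]
    have hset : Finset.univ.erase (g j) =
        (Finset.univ \ Finset.image g Finset.univ) ∪
          Finset.image g (Finset.univ.erase j) := by
      rw [Finset.image_erase hginj]
      ext k
      simp only [Finset.mem_erase, Finset.mem_univ, and_true, Finset.mem_union,
        Finset.mem_sdiff, true_and]
      constructor
      · intro hk
        by_cases hk' : k ∈ Finset.image g Finset.univ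
        · exact Or.inr ⟨hk, hk'⟩
        · exact Or.inl hk'
      · rintro (hk | hk)
        · intro hcon
          exact hk (hcon ▸ Finset.mem_image_of_mem g (Finset.mem_univ j))
        · exact hk.1
    have hdisj : Disjoint (Finset.univ \ Finset.image g Finset.univ)
        (Finset.image g (Finset.univ.erase j)) := by
      rw [Finset.disjoint_left]
      intro k hk hk'
      exact (Finset.mem_sdiff.mp hk).2
        (Finset.image_subset_image (Finset.erase_subset _ _) hk')
    rw [hset, Finset.prod_union hdisj,
      Finset.prod_image fun p _ q _ hpq => hginj hpq]
  rw [hMeq, Matrix.det_mul_column]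
  apply mul_pos
  · apply Finset.prod_pos
    intro i _
    apply Finset.prod_pos
    intro k _
    exact sub_pos.mpr (hxall (f i) k)
  · rw [cauchy_like_det a b hb]
    apply Finset.prod_pos
    intro i _
    apply Finset.prod_pos
    intro j hj
    have hij : i < j := Finset.mem_Ioi.mp hj
    have h1 : a j - a i < 0 := sub_neg.mpr (ht (hf hij))
    have h2 : b i - b j < 0 := sub_neg.mpr (hx (hg hij))
    exact mul_pos_of_neg_of_neg h1 h2
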